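/- arXiv:0704.0884 — 5 statements merged into one kernel-verified Lean document; each statement's English description precedes it below -/
import Mathlib

section
/- Let Ω ⊆ ℂⁿ be a bounded open set and A ⊆ Ω. Define h_{A,Ω} := sup{ u : u plurisubharmonic on Ω, u ≤ 1 on Ω, u ≤ 0 on A }, and let h*_{A,Ω} be its upper semicontinuous regularization. Then either h*_{A,Ω} ≡ 0 on Ω, or sup_Ω h*_{A,Ω} = 1. -/
open Complex Metric MeasureTheory Filter Set Topology

noncomputable section

/-- The positive part of an extended real number, as an extended nonnegative real. -/
def EReal.posPart (x : EReal) : ENNReal := if x = ⊤ then ⊤ else ENNReal.ofReal x.toReal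

/-- The average of an `EReal`-valued function over the circle of center `z` and radius `r`. -/
def erealCircleAvg (u : ℂ → EReal) (z : ℂ) (r : ℝ) : EReal :=
  ((∫⁻ θ in Set.Ioc (0:ℝ) (2 * Real.pi), (u (circleMap z r θ)).posPart : ENNReal) : EReal)
      / ((2 * Real.pi : ℝ) : EReal)
    - ((∫⁻ θ in Set.Ioc (0:ℝ) (2 * Real.pi), (-(u (circleMap z r θ))).posPart : ENNReal) : EReal)
      / ((2 * Real.pi : ℝ) : EReal)

variable {V : Type*} [NormedAddCommGroup V] [NormedSpace ℂ V]

/-- Plurisubharmonicity of an `EReal`-valued function on a set: upper semicontinuity together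
with the sub-mean value inequality on every complex line.  For `V = ℂ` this is subharmonicity. -/
def PSHOn (u : V → EReal) (Ω : Set V) : Prop :=
  UpperSemicontinuousOn u Ω ∧
    ∀ z ∈ Ω, ∀ b : V, ∀ r : ℝ, 0 < r →
      (∀ lam : ℂ, ‖lam‖ ≤ r → z + lam • b ∈ Ω) →
      u z ≤ erealCircleAvg (fun lam => u (z + lam • b)) 0 r

/-- The relative extremal function `h_{A,Ω}`. -/
def relExt (A Ω : Set V) : V → EReal := fun z =>
  sSup ((fun u : V → EReal => u z) ''
    {u | PSHOn u Ω ∧ (∀ w ∈ Ω, u w ≤ 1) ∧ ∀ w ∈ A, u w ≤ 0})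

/-- The upper semicontinuous regularization `h*_{A,Ω}`. -/
def relExtStar (A Ω : Set V) : V → EReal := fun z =>
  Filter.limsup (relExt A Ω) (nhdsWithin z Ω)

/-- Hartogs pseudoconvexity: `-log dist(·, Ωᶜ)` is plurisubharmonic on `Ω`. -/
def IsPseudoconvex (Ω : Set V) : Prop :=
  IsOpen Ω ∧ PSHOn (fun z => ((-Real.log (Metric.infDist z Ωᶜ) : ℝ) : EReal)) Ω

/-- `S` does not separate domains in `D`. -/
def DoesNotSeparate (S D : Set V) : Prop :=
  ∀ U ⊆ D, IsOpen U → IsConnected U → IsConnected (U \ S)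

/-- Meromorphic on an open set: locally a quotient of holomorphic functions (with a
representative function whose values at the pole set are irrelevant). -/
def MeromorphicOnOpen (F : V → ℂ) (Ω : Set V) : Prop :=
  ∀ z ∈ Ω, ∃ U : Set V, IsOpen U ∧ z ∈ U ∧ U ⊆ Ω ∧
    ∃ g h : V → ℂ, DifferentiableOn ℂ g U ∧ DifferentiableOn ℂ h U ∧
      (¬ ∀ w ∈ U, h w = 0) ∧ ∀ w ∈ U, h w ≠ 0 → F w = g w / h w

/-- The open polydisc of radius `r` in `ℂⁿ`. -/
def polydisc (n : ℕ) (r : ℝ) : Set (Fin n → ℂ) := {z | ∀ k, ‖z k‖ < r}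

/-- Baire category I relative to `D`: contained in a countable union of relatively closed
subsets of `D` with empty interior. -/
def BaireCatI (S D : Set V) : Prop :=
  ∃ F : ℕ → Set V, (∀ k, F k ⊆ D ∧ closure (F k) ∩ D ⊆ F k ∧ interior (F k) = ∅) ∧
    S ⊆ ⋃ k, F k

end

/-! If `M := sup_Ω h*_{A,Ω} < 1`, choose a real `c` with `max M 0 < c < 1`. Every member `u` of the
family defining `h_{A,Ω}` is then `≤ c` on `Ω`, and since positive multiples of plurisubharmonic
functions are plurisubharmonic, `u / c` belongs to the family as well. Hence `h ≤ c · h`, which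
together with `0 ≤ h ≤ 1` on `Ω` forces `h = 0` there, and so `h* ≡ 0` on `Ω`. -/

namespace EReal

lemma posPart_eq_toENNReal (x : EReal) : x.posPart = x.toENNReal := rfl

lemma posPart_coe_mul {c : ℝ} (hc : 0 ≤ c) (x : EReal) :
    ((c : EReal) * x).posPart = ENNReal.ofReal c * x.posPart := by
  simp only [posPart_eq_toENNReal, toENNReal_mul (EReal.coe_nonneg.2 hc), real_coe_toENNReal]

lemma continuous_coe_mul {c : ℝ} (hc : 0 < c) : Continuous fun x : EReal => (c : EReal) * x :=
  continuous_iff_continuousAt.2 fun _ =>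
    (EReal.continuousAt_mul (.inl (coe_ne_zero.2 hc.ne')) (.inl (coe_ne_zero.2 hc.ne'))
      (.inl (coe_ne_bot c)) (.inl (coe_ne_top c))).comp
      (continuous_const.prodMk continuous_id).continuousAt

end EReal

lemma erealCircleAvg_coe_mul {c : ℝ} (hc : 0 ≤ c) (u : ℂ → EReal) (z : ℂ) (r : ℝ) :
    erealCircleAvg (fun lam => (c : EReal) * u lam) z r = c * erealCircleAvg u z r := by
  simp only [erealCircleAvg, ← mul_neg, EReal.posPart_coe_mul hc,
    lintegral_const_mul' _ _ ENNReal.ofReal_ne_top, EReal.coe_ennreal_mul,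
    EReal.coe_ennreal_ofReal, max_eq_left hc, ← EReal.mul_div]
  exact (EReal.mul_sub_of_nonneg_of_ne_top (EReal.coe_nonneg.2 hc) (EReal.coe_ne_top c)).symm

section PSH

variable {V : Type*} [NormedAddCommGroup V] [NormedSpace ℂ V]

lemma pshOn_zero (Ω : Set V) : PSHOn (fun _ => (0 : EReal)) Ω := by
  refine ⟨upperSemicontinuousOn_const, fun z _ b r _ _ => ?_⟩
  simp [erealCircleAvg, EReal.posPart]

lemma PSHOn.coe_mul {u : V → EReal} {Ω : Set V} {c : ℝ} (hc : 0 < c) (hu : PSHOn u Ω) :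
    PSHOn (fun z => (c : EReal) * u z) Ω := by
  have hc₀ : (0 : EReal) ≤ c := EReal.coe_nonneg.2 hc.le
  refine ⟨(EReal.continuous_coe_mul hc).comp_upperSemicontinuousOn hu.1
    fun _ _ h => mul_le_mul_of_nonneg_left h hc₀, fun z hz b r hr hdisc => ?_⟩
  rw [erealCircleAvg_coe_mul hc.le]
  exact mul_le_mul_of_nonneg_left (hu.2 z hz b r hr hdisc) hc₀

end PSH

section RelExt

variable {V : Type*} [NormedAddCommGroup V] [NormedSpace ℂ V] {A Ω : Set V} {z : V}

lemma le_relExt {u : V → EReal} (hu : PSHOn u Ω) (hu₁ : ∀ w ∈ Ω, u w ≤ 1)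
    (hu₀ : ∀ w ∈ A, u w ≤ 0) (z : V) : u z ≤ relExt A Ω z :=
  le_sSup ⟨u, ⟨hu, hu₁, hu₀⟩, rfl⟩

lemma relExt_le {a : EReal}
    (h : ∀ u, PSHOn u Ω → (∀ w ∈ Ω, u w ≤ 1) → (∀ w ∈ A, u w ≤ 0) → u z ≤ a) :
    relExt A Ω z ≤ a :=
  sSup_le <| by rintro _ ⟨u, ⟨hu, hu₁, hu₀⟩, rfl⟩; exact h u hu hu₁ hu₀

lemma relExt_nonneg (z : V) : 0 ≤ relExt A Ω z :=
  le_relExt (pshOn_zero Ω) (fun _ _ => zero_le_one) (fun _ _ => le_rfl) z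

lemma relExt_le_one (hz : z ∈ Ω) : relExt A Ω z ≤ 1 :=
  relExt_le fun _ _ hu₁ _ => hu₁ z hz

lemma relExt_le_relExtStar (hz : z ∈ Ω) : relExt A Ω z ≤ relExtStar A Ω z :=
  le_limsup_of_frequently_le <|
    (frequently_pure.2 le_rfl : ∃ᶠ w in pure z, relExt A Ω z ≤ relExt A Ω w).filter_mono
      (pure_le_nhdsWithin hz)

lemma relExtStar_le_of_forall_le {a : EReal} (h : ∀ w ∈ Ω, relExt A Ω w ≤ a) :
    relExtStar A Ω z ≤ a :=
  limsup_le_of_le (by isBoundedDefault) (eventually_mem_nhdsWithin.mono h)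

lemma relExtStar_le_one : relExtStar A Ω z ≤ 1 :=
  relExtStar_le_of_forall_le fun _ => relExt_le_one

lemma relExt_le_coe_mul_relExt {c : ℝ} (hc : 0 < c) (hbound : ∀ w ∈ Ω, relExt A Ω w ≤ c)
    (z : V) : relExt A Ω z ≤ c * relExt A Ω z := by
  refine relExt_le fun u hu hu₁ hu₀ => ?_
  have hc₀ : (0 : EReal) ≤ (c⁻¹ : ℝ) := EReal.coe_nonneg.2 (inv_nonneg.2 hc.le)
  have hscaled : ((c⁻¹ : ℝ) : EReal) * u z ≤ relExt A Ω z := by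
    refine le_relExt (hu.coe_mul (inv_pos.2 hc)) (fun w hw => ?_) (fun w hw => ?_) z
    · calc ((c⁻¹ : ℝ) : EReal) * u w ≤ ((c⁻¹ : ℝ) : EReal) * c :=
            mul_le_mul_of_nonneg_left ((le_relExt hu hu₁ hu₀ w).trans (hbound w hw)) hc₀
        _ = 1 := by rw [← EReal.coe_mul, inv_mul_cancel₀ hc.ne', EReal.coe_one]
    · simpa using mul_le_mul_of_nonneg_left (hu₀ w hw) hc₀
  calc u z = (c : EReal) * (((c⁻¹ : ℝ) : EReal) * u z) := by
        rw [← mul_assoc, ← EReal.coe_mul, mul_inv_cancel₀ hc.ne', EReal.coe_one, one_mul]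
    _ ≤ c * relExt A Ω z := mul_le_mul_of_nonneg_left hscaled (EReal.coe_nonneg.2 hc.le)

lemma relExt_eq_zero_of_le {c : ℝ} (hc₀ : 0 < c) (hc₁ : c < 1)
    (hbound : ∀ w ∈ Ω, relExt A Ω w ≤ c) (hz : z ∈ Ω) : relExt A Ω z = 0 := by
  have hfin : relExt A Ω z ≠ ⊤ := ((relExt_le_one hz).trans_lt (EReal.coe_lt_top 1)).ne
  have hfin' : relExt A Ω z ≠ ⊥ := ((relExt_nonneg z).trans_lt' EReal.bot_lt_zero).ne'
  obtain ⟨h, hh⟩ : ∃ h : ℝ, relExt A Ω z = h := ⟨_, (EReal.coe_toReal hfin hfin').symm⟩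
  have hnonneg : (0 : EReal) ≤ h := hh ▸ relExt_nonneg z
  have hscale : (h : EReal) ≤ c * h := hh ▸ relExt_le_coe_mul_relExt hc₀ hbound z
  rw [hh, EReal.coe_eq_zero]
  norm_cast at hnonneg hscale
  nlinarith

end RelExt

theorem stmt_0_general {n : ℕ} (Ω A : Set (Fin n → ℂ)) :
    (∀ z ∈ Ω, relExtStar A Ω z = 0) ∨ sSup (relExtStar A Ω '' Ω) = 1 := by
  refine or_iff_not_imp_right.2 fun hM => ?_
  have hM₁ : sSup (relExtStar A Ω '' Ω) < 1 :=
    (sSup_le (forall_mem_image.2 fun _ _ => relExtStar_le_one)).lt_of_ne hM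
  obtain ⟨c, hc, hc₁⟩ := EReal.lt_iff_exists_real_btwn.1 (max_lt hM₁ zero_lt_one)
  have hc₀ : 0 < c := EReal.coe_pos.1 ((le_max_right _ _).trans_lt hc)
  have hbound : ∀ w ∈ Ω, relExt A Ω w ≤ c := fun w hw =>
    (relExt_le_relExtStar hw).trans <|
      (le_sSup (mem_image_of_mem _ hw)).trans ((le_max_left _ _).trans hc.le)
  have hzero : ∀ w ∈ Ω, relExt A Ω w = 0 := fun w hw =>
    relExt_eq_zero_of_le hc₀ (by exact_mod_cast hc₁) hbound hw
  exact fun z hz => le_antisymm (relExtStar_le_of_forall_le fun w hw => (hzero w hw).le)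
    ((relExt_nonneg z).trans (relExt_le_relExtStar hz))

/-- For a bounded open `Ω ⊆ ℂⁿ` and `A ⊆ Ω`, either `h*_{A,Ω} ≡ 0` on `Ω`
or `sup_Ω h*_{A,Ω} = 1`. -/
theorem stmt_0 {n : ℕ} (Ω A : Set (Fin n → ℂ)) (hΩ : IsOpen Ω)
    (hΩb : Bornology.IsBounded Ω) (hA : A ⊆ Ω) :
    (∀ z ∈ Ω, relExtStar A Ω z = 0) ∨ sSup (relExtStar A Ω '' Ω) = 1 :=
  stmt_0_general Ω A
end

section
/- Let v be subharmonic on 2E with v(0)=0 and {v = −∞} dense in 2E, let u(z) := Σ_{k=1}^n v(z_k) on (2E)ⁿ, and 𝒜 := {z ∈ Eⁿ : u(z) < −1}. Let 𝒮 be any closed subset of Eⁿ contained in Eⁿ ∖ 𝒜. Then 𝒮 does not separate domains in Eⁿ: for every subdomain U ⊆ Eⁿ, the set U ∖ 𝒮 is connected. -/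
open Complex Metric MeasureTheory Filter Set Topology

/-!
Write `P` for the dense set `{v = -∞}`. A point of `Eⁿ` with some coordinate in `P` has
`u = -∞`, so it lies in `𝒜` and off `𝒮`. Hence, in a polydisc `B ⊆ Eⁿ`, every complex
coordinate slice `{z ∈ B | z k = w}` with `w ∈ P` is a convex subset of `B ∖ 𝒮`. Since `n ≥ 2`,
two points of `B ∖ 𝒮` can be joined inside `B ∖ 𝒮`: push the first coordinate of one point and
the second coordinate of the other into `P` by short segments, then travel along a slice of the
first kind to a point where both slices meet, and back along a slice of the second kind. So
`B ∖ 𝒮` is path-connected for every small polydisc `B`, and a chain-of-balls argument in the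
domain `U` shows that `U ∖ 𝒮` is path-connected.
-/

open Function

section Topological

variable {X : Type*} [TopologicalSpace X]

lemma IsPathConnected.subset_pathComponentIn_of_mem {s F : Set X} {p x : X}
    (hs : IsPathConnected s) (hps : p ∈ s) (hpx : p ∈ pathComponentIn F x) (hsF : s ⊆ F) :
    s ⊆ pathComponentIn F x :=
  (hs.subset_pathComponentIn hps hsF).trans (pathComponentIn_congr hpx).le

lemma IsOpen.diff_of_closure_inter_subset {O D S : Set X} (hO : IsOpen O) (hOD : O ⊆ D)
    (hS : closure S ∩ D ⊆ S) : IsOpen (O \ S) := by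
  have : O \ S = O \ closure S :=
    Subset.antisymm (fun x hx => ⟨hx.1, fun hxS => hx.2 (hS ⟨hxS, hOD hx.1⟩)⟩)
      (sdiff_subset_sdiff_right subset_closure)
  rw [this]
  exact hO.sdiff isClosed_closure

end Topological

theorem IsConnected.isPathConnected_diff_of_ball {X : Type*} [PseudoMetricSpace X]
    {U S : Set X} (hU : IsConnected U) (hUo : IsOpen U)
    (hball : ∀ c ε, 0 < ε → ball c ε ⊆ U → IsPathConnected (ball c ε \ S)) :
    IsPathConnected (U \ S) := by
  obtain ⟨x₀, hx₀⟩ := hU.nonempty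
  obtain ⟨ε₀, hε₀, hx₀U⟩ := isOpen_iff.1 hUo x₀ hx₀
  obtain ⟨a, ha⟩ := (hball x₀ ε₀ hε₀ hx₀U).nonempty
  set C := pathComponentIn (U \ S) a
  set W := {y | ∃ ε > 0, ball y ε ⊆ U ∧ ball y ε \ S ⊆ C}
  have hWo : IsOpen W := by
    refine isOpen_iff.2 fun y ⟨ε, hε, hyU, hyC⟩ => ⟨ε, hε, fun z hz => ?_⟩
    have hsub : ball z (ε - dist z y) ⊆ ball y ε := ball_subset_ball' (by linarith)
    exact ⟨ε - dist z y, sub_pos.2 hz, hsub.trans hyU, (sdiff_subset_sdiff_left hsub).trans hyC⟩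
  have hx₀W : x₀ ∈ W := ⟨ε₀, hε₀, hx₀U,
    (hball x₀ ε₀ hε₀ hx₀U).subset_pathComponentIn ha (sdiff_subset_sdiff_left hx₀U)⟩
  have hUW : U ⊆ W := by
    refine hU.isPreconnected.subset_of_closure_inter_subset hWo ⟨x₀, hx₀, hx₀W⟩ ?_
    rintro y ⟨hyW, hyU⟩
    obtain ⟨ε, hε, hyU'⟩ := isOpen_iff.1 hUo y hyU
    obtain ⟨z, ⟨δ, hδ, -, hzC⟩, hyz⟩ := mem_closure_iff.1 hyW ε hε
    set r := min δ (ε - dist y z)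
    have hzy : ball z r ⊆ ball y ε :=
      ball_subset_ball' (by rw [dist_comm]; linarith [min_le_right δ (ε - dist y z)])
    have hzz : ball z r ⊆ ball z δ := ball_subset_ball (min_le_left _ _)
    obtain ⟨p, hp, hpS⟩ := (hball z r (lt_min hδ (by linarith)) (hzy.trans hyU')).nonempty
    exact ⟨ε, hε, hyU', (hball y ε hε hyU').subset_pathComponentIn_of_mem ⟨hzy hp, hpS⟩
      (hzC ⟨hzz hp, hpS⟩) (sdiff_subset_sdiff_left hyU')⟩
  refine ⟨a, ⟨hx₀U ha.1, ha.2⟩, fun {y} hy => ?_⟩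
  obtain ⟨ε, hε, -, hyC⟩ := hUW hy.1
  exact hyC ⟨mem_ball_self hε, hy.2⟩

section Pi

lemma apply_mem_ball {ι X : Type*} [Fintype ι] [PseudoMetricSpace X] {x c : ι → X} {ε : ℝ}
    (hx : x ∈ ball c ε) (k : ι) : x k ∈ ball (c k) ε :=
  (dist_le_pi_dist x c k).trans_lt hx

lemma update_mem_ball {ι X : Type*} [Fintype ι] [DecidableEq ι] [PseudoMetricSpace X]
    {x c : ι → X} {ε : ℝ} {k : ι} {w : X} (hx : x ∈ ball c ε)
    (hw : w ∈ ball (c k) ε) : update x k w ∈ ball c ε := by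
  have hε : 0 < ε := pos_of_mem_ball hw
  rw [ball_pi c hε] at hx ⊢
  exact (update_mem_pi_iff_of_mem hx).2 fun _ => hw

variable {ι E : Type*} [Fintype ι] [NormedAddCommGroup E] [NormedSpace ℝ E]

lemma exists_joinedIn_update [DecidableEq ι] {O : Set (ι → E)} {P : Set E} {a : ι → E} {k : ι}
    (hO : IsOpen O) (ha : a ∈ O) (hak : a k ∈ closure P) :
    ∃ w ∈ P, JoinedIn O a (update a k w) := by
  obtain ⟨δ, hδ, haO⟩ := isOpen_iff.1 hO a ha
  obtain ⟨w, hwP, hw⟩ := mem_closure_iff.1 hak δ hδ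
  have hupd : update a k w ∈ ball a δ :=
    update_mem_ball (mem_ball_self hδ) (by rw [mem_ball, dist_comm]; exact hw)
  exact ⟨w, hwP, (((convex_ball a δ).isPathConnected ⟨a, mem_ball_self hδ⟩).joinedIn a
    (mem_ball_self hδ) _ hupd).mono haO⟩

lemma joinedIn_of_apply_eq {S : Set (ι → E)} {P : Set E} {c x y : ι → E} {ε : ℝ} {k : ι}
    {w : E} (hSP : ∀ z ∈ S, ∀ k, z k ∉ P) (hw : w ∈ P) (hx : x ∈ ball c ε) (hy : y ∈ ball c ε)
    (hxk : x k = w) (hyk : y k = w) : JoinedIn (ball c ε \ S) x y := by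
  have hconv : Convex ℝ (ball c ε ∩ {z | z k = w}) :=
    (convex_ball c ε).inter
      ((convex_singleton w).linear_preimage (LinearMap.proj (R := ℝ) (φ := fun _ : ι => E) k) :)
  have hsub : ball c ε ∩ {z | z k = w} ⊆ ball c ε \ S :=
    fun z hz => ⟨hz.1, fun hzS => hSP z hzS k (hz.2 ▸ hw)⟩
  exact ((hconv.isPathConnected ⟨x, hx, hxk⟩).joinedIn x ⟨hx, hxk⟩ y ⟨hy, hyk⟩).mono hsub

theorem isPathConnected_ball_diff [DecidableEq ι] [Nontrivial ι] {P : Set E} {S : Set (ι → E)}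
    {c : ι → E} {ε : ℝ} (hε : 0 < ε) (hP : ∀ k, ball (c k) ε ⊆ closure P)
    (hopen : IsOpen (ball c ε \ S))
    (hSP : ∀ z ∈ S, ∀ k, z k ∉ P) : IsPathConnected (ball c ε \ S) := by
  obtain ⟨i, j, hij⟩ := exists_pair_ne ι
  refine isPathConnected_iff.2 ⟨?_, fun x hx y hy => ?_⟩
  · obtain ⟨w, hwP, hw⟩ := mem_closure_iff.1 (hP i (mem_ball_self hε)) ε hε
    refine ⟨update c i w, update_mem_ball (mem_ball_self hε) ?_, fun hS' => ?_⟩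
    · rw [mem_ball, dist_comm]; exact hw
    · exact hSP _ hS' i (by rwa [update_self])
  obtain ⟨w₀, hw₀, hxx'⟩ := exists_joinedIn_update hopen hx (hP i (apply_mem_ball hx.1 i))
  obtain ⟨w₁, hw₁, hyy'⟩ := exists_joinedIn_update hopen hy (hP j (apply_mem_ball hy.1 j))
  set x' := update x i w₀
  set y' := update y j w₁
  have hx' : x' ∈ ball c ε := hxx'.mem.2.1
  have hy' : y' ∈ ball c ε := hyy'.mem.2.1
  -- `m` lies on both slices `{z i = w₀}` and `{z j = w₁}`.
  set m := update y' i w₀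
  have hm : m ∈ ball c ε :=
    update_mem_ball hy' (by simpa [x'] using apply_mem_ball hx' i)
  have hmj : m j = w₁ := by simp [m, y', hij.symm]
  have hx'm : JoinedIn (ball c ε \ S) x' m :=
    joinedIn_of_apply_eq (k := i) hSP hw₀ hx' hm (by simp [x']) (by simp [m])
  have hmy' : JoinedIn (ball c ε \ S) m y' :=
    joinedIn_of_apply_eq (k := j) hSP hw₁ hm hy' hmj (by simp [y'])
  exact ((hxx'.trans hx'm).trans hmy').trans hyy'.symm

end Pi

theorem stmt_3_general (n : ℕ) (hn : 2 ≤ n) (v : ℂ → EReal)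
    (hdense : Metric.ball (0:ℂ) 2 ⊆ closure {z ∈ Metric.ball (0:ℂ) 2 | v z = ⊥})
    (𝒮 : Set (Fin n → ℂ))
    (h𝒮 : 𝒮 ⊆ polydisc n 1 \ {z ∈ polydisc n 1 | (∑ k, v (z k)) < -1})
    (h𝒮closed : closure 𝒮 ∩ polydisc n 1 ⊆ 𝒮) :
    DoesNotSeparate 𝒮 (polydisc n 1) := by
  have : Nontrivial (Fin n) := Fin.nontrivial_iff_two_le.2 hn
  have h𝒮P : ∀ z ∈ 𝒮, ∀ k, z k ∉ {w ∈ ball (0:ℂ) 2 | v w = ⊥} := by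
    intro z hz k hk
    have hsum : ∑ k, v (z k) = ⊥ := WithBot.sum_eq_bot_iff.2 ⟨k, Finset.mem_univ k, hk.2⟩
    exact (h𝒮 hz).2 ⟨(h𝒮 hz).1, hsum ▸ EReal.bot_lt_coe (-1)⟩
  intro U hU hUo hUc
  refine (hUc.isPathConnected_diff_of_ball hUo fun c ε hε hcU => ?_).isConnected
  refine isPathConnected_ball_diff hε (fun k w hw => hdense ?_)
    (isOpen_ball.diff_of_closure_inter_subset (hcU.trans hU) h𝒮closed) h𝒮P
  have := hU (hcU (update_mem_ball (mem_ball_self hε) hw)) k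
  rw [update_self] at this
  rw [mem_ball_zero_iff]
  linarith

/-- Proposition 3.1: any relatively closed subset `𝒮` of `Eⁿ` contained in
`Eⁿ ∖ 𝒜` does not separate domains in `Eⁿ`. -/
theorem stmt_3 (n : ℕ) (hn : 2 ≤ n) (v : ℂ → EReal)
    (hv : PSHOn v (Metric.ball (0:ℂ) 2)) (hv0 : v 0 = 0)
    (hdense : Metric.ball (0:ℂ) 2 ⊆ closure {z ∈ Metric.ball (0:ℂ) 2 | v z = ⊥})
    (𝒮 : Set (Fin n → ℂ))
    (h𝒮 : 𝒮 ⊆ polydisc n 1 \ {z ∈ polydisc n 1 | (∑ k, v (z k)) < -1})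
    (h𝒮closed : closure 𝒮 ∩ polydisc n 1 ⊆ 𝒮) :
    DoesNotSeparate 𝒮 (polydisc n 1) :=
  stmt_3_general n hn v hdense 𝒮 h𝒮 h𝒮closed
end

section
/- Let 𝒜 ⊆ Eⁿ be open and dense, and let 𝒮 ⊆ Eⁿ ∖ 𝒜 be a closed set that does not separate domains in Eⁿ. Then for any closed sets F₁ ⊆ ℂ^p and F₂ ⊆ ℂ^q (p, q ≥ 0), the closed set F₁ × 𝒮 × F₂ does not separate domains in ℂ^p × Eⁿ × ℂ^q. -/
/-!
A connected open set `U` minus `S` is connected as soon as every point of `U` has arbitrarily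
small neighbourhoods `V` with `V ∖ S` connected: the relation "linked by a preconnected subset
of `U ∖ S` that swallows `V ∖ S` for small neighbourhoods `V` of both points" is then locally
true and transitive on `U`, hence total. For `S = F₁ × 𝒮 × F₂` such neighbourhoods are cubes
`Δ₁ × Δ₂ × Δ₃` with `Δ₂ ⊆ Eⁿ`: the connected set `Δ₁ × (Δ₂ ∖ 𝒮) × Δ₃` meets every slice
`{α} × Δ₂ × Δ₃` with `α ∉ F₁` and every slice `Δ₁ × Δ₂ × {γ}` with `γ ∉ F₂`.
-/

open Complex Metric MeasureTheory Filter Set Topology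

section Topology

variable {X Y : Type*} [TopologicalSpace X] [TopologicalSpace Y]

theorem IsConnected.diff_of_nhds_basis {U S : Set X} (hU : IsConnected U) (hUo : IsOpen U)
    (hS : ∀ z ∈ U, ∀ N ∈ 𝓝 z, ∃ V ∈ 𝓝 z, V ⊆ N ∧ IsConnected (V \ S)) :
    IsConnected (U \ S) := by
  let Linked : X → X → Prop := fun x y => ∃ C ⊆ U \ S, IsPreconnected C ∧
    (∃ V ∈ 𝓝 x, V \ S ⊆ C) ∧ ∃ V ∈ 𝓝 y, V \ S ⊆ C
  have local_linked : ∀ x ∈ U, ∀ᶠ y in 𝓝[U] x, Linked x y := by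
    intro x hx
    obtain ⟨V, hV, hVU, hVS⟩ := hS x hx U (hUo.mem_nhds hx)
    filter_upwards [mem_nhdsWithin_of_mem_nhds (eventually_mem_nhds_iff.2 hV)] with y hy
    exact ⟨V \ S, sdiff_subset_sdiff_left hVU, hVS.isPreconnected, ⟨V, hV, subset_rfl⟩,
      ⟨V, hy, subset_rfl⟩⟩
  have trans_linked : ∀ x y z, x ∈ U → y ∈ U → z ∈ U → Linked x y → Linked y z →
      Linked x z := by
    rintro x y z - hy - ⟨C₁, hC₁U, hC₁, hx₁, V₁, hV₁, hV₁C⟩ ⟨C₂, hC₂U, hC₂, ⟨V₂, hV₂, hV₂C⟩, hz₂⟩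
    obtain ⟨V, -, hV, hVS⟩ := hS y hy _ (inter_mem hV₁ hV₂)
    obtain ⟨t, htV, htS⟩ := hVS.nonempty
    refine ⟨C₁ ∪ C₂, union_subset hC₁U hC₂U, hC₁.union t ?_ ?_ hC₂, ?_, ?_⟩
    · exact hV₁C ⟨(hV htV).1, htS⟩
    · exact hV₂C ⟨(hV htV).2, htS⟩
    · exact hx₁.imp fun _ ⟨hV, hVC⟩ => ⟨hV, hVC.trans subset_union_left⟩
    · exact hz₂.imp fun _ ⟨hV, hVC⟩ => ⟨hV, hVC.trans subset_union_right⟩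
  have symm_linked : ∀ x y, x ∈ U → y ∈ U → Linked x y → Linked y x :=
    fun _ _ _ _ ⟨C, hCU, hC, hx, hy⟩ => ⟨C, hCU, hC, hy, hx⟩
  refine ⟨?_, isPreconnected_of_forall_pair fun a ha b hb => ?_⟩
  · obtain ⟨z, hz⟩ := hU.nonempty
    obtain ⟨V, -, hVU, hVS⟩ := hS z hz U (hUo.mem_nhds hz)
    exact hVS.nonempty.mono (sdiff_subset_sdiff_left hVU)
  · obtain ⟨C, hCU, hC, ⟨V, hV, hVC⟩, V', hV', hV'C⟩ := hU.isPreconnected.induction₂ Linked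
      local_linked trans_linked symm_linked ha.1 hb.1
    exact ⟨C, hCU, hVC ⟨mem_of_mem_nhds hV, ha.2⟩, hV'C ⟨mem_of_mem_nhds hV', hb.2⟩, hC⟩

theorem IsConnected.prod_diff_prod {P F : Set X} {Q G : Set Y} (hP : IsConnected P)
    (hQ : IsConnected Q) (hQG : IsConnected (Q \ G)) :
    IsConnected (P ×ˢ Q \ F ×ˢ G) := by
  have hbase : P ×ˢ (Q \ G) ⊆ P ×ˢ Q \ F ×ˢ G :=
    fun x ⟨hx₁, hx₂, hx₂G⟩ => ⟨⟨hx₁, hx₂⟩, fun hx => hx₂G hx.2⟩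
  obtain ⟨a, ha⟩ := hP.nonempty
  obtain ⟨b, hb⟩ := hQG.nonempty
  refine ⟨⟨(a, b), hbase ⟨ha, hb⟩⟩, isPreconnected_of_forall (a, b) ?_⟩
  rintro ⟨α, β⟩ ⟨⟨hα, hβ⟩, hαβ⟩
  by_cases hβG : β ∈ G
  · have hαF : α ∉ F := fun hαF => hαβ ⟨hαF, hβG⟩
    refine ⟨{α} ×ˢ Q ∪ P ×ˢ (Q \ G), union_subset ?_ hbase, Or.inr ⟨ha, hb⟩,
      Or.inl ⟨rfl, hβ⟩, ?_⟩
    · rintro ⟨α', β'⟩ ⟨rfl, hβ'⟩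
      exact ⟨⟨hα, hβ'⟩, fun h => hαF h.1⟩
    · exact (isPreconnected_singleton.prod hQ.isPreconnected).union (α, b) ⟨rfl, hb.1⟩
        ⟨hα, hb⟩ (hP.isPreconnected.prod hQG.isPreconnected)
  · exact ⟨P ×ˢ (Q \ G), hbase, ⟨ha, hb⟩, ⟨hα, hβ, hβG⟩,
      hP.isPreconnected.prod hQG.isPreconnected⟩

theorem IsConnected.prod_diff_prod' {P F : Set X} {Q G : Set Y} (hP : IsConnected P)
    (hPF : IsConnected (P \ F)) (hQ : IsConnected Q) :
    IsConnected (P ×ˢ Q \ F ×ˢ G) := by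
  have h := (Homeomorph.prodComm X Y).isConnected_preimage.2 (hQ.prod_diff_prod hP hPF (F := G))
  simpa only [Homeomorph.coe_prodComm, preimage_sdiff, preimage_swap_prod] using h

end Topology

theorem stmt_5_general (n p q : ℕ) (𝒮 : Set (Fin n → ℂ))
    (h𝒮sep : DoesNotSeparate 𝒮 (polydisc n 1))
    (F₁ : Set (Fin p → ℂ)) (F₂ : Set (Fin q → ℂ)) :
    DoesNotSeparate (F₁ ×ˢ (𝒮 ×ˢ F₂))
      ((Set.univ : Set (Fin p → ℂ)) ×ˢ (polydisc n 1 ×ˢ (Set.univ : Set (Fin q → ℂ)))) := by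
  intro U hUD hUo hU
  refine hU.diff_of_nhds_basis hUo fun z hz N hN => ?_
  obtain ⟨δ, hδ, hδN⟩ := Metric.mem_nhds_iff.1 (inter_mem hN (hUo.mem_nhds hz))
  obtain ⟨a, b, c⟩ := z
  have hcube : ball (a, b, c) δ = ball a δ ×ˢ ball b δ ×ˢ ball c δ := by
    rw [ball_prod_same, ball_prod_same]
  have hΔ₂ : ball b δ ⊆ polydisc n 1 := fun β hβ => by
    have hβ' : (a, β, c) ∈ ball (a, b, c) δ := hcube ▸ ⟨mem_ball_self hδ, hβ, mem_ball_self hδ⟩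
    exact (hUD (hδN hβ').2).2.1
  refine ⟨ball (a, b, c) δ, ball_mem_nhds _ hδ, fun w hw => (hδN hw).1, hcube ▸ ?_⟩
  have hball : ∀ {E : Type} [NormedAddCommGroup E] [NormedSpace ℝ E] (x : E),
      IsConnected (ball x δ) := fun x => (convex_ball x δ).isConnected (nonempty_ball.2 hδ)
  exact (hball a).prod_diff_prod ((hball b).prod (hball c))
    ((hball b).prod_diff_prod' (h𝒮sep _ hΔ₂ isOpen_ball (hball b)) (hball c))

/-- Corollary 3.2(ii): if `𝒜 ⊆ Eⁿ` is open and dense and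
`𝒮 ⊆ Eⁿ ∖ 𝒜` is relatively closed and does not separate domains in `Eⁿ`, then for any
closed `F₁ ⊆ ℂᵖ`, `F₂ ⊆ ℂ^q`, the set `F₁ × 𝒮 × F₂` does not separate domains in
`ℂᵖ × Eⁿ × ℂ^q`. -/
theorem stmt_5 (n p q : ℕ) (𝒜 𝒮 : Set (Fin n → ℂ))
    (h𝒜open : IsOpen 𝒜) (h𝒜sub : 𝒜 ⊆ polydisc n 1)
    (h𝒜dense : polydisc n 1 ⊆ closure 𝒜)
    (h𝒮 : 𝒮 ⊆ polydisc n 1 \ 𝒜)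
    (h𝒮closed : closure 𝒮 ∩ polydisc n 1 ⊆ 𝒮)
    (h𝒮sep : DoesNotSeparate 𝒮 (polydisc n 1))
    (F₁ : Set (Fin p → ℂ)) (F₂ : Set (Fin q → ℂ))
    (hF₁ : IsClosed F₁) (hF₂ : IsClosed F₂) :
    DoesNotSeparate (F₁ ×ˢ (𝒮 ×ˢ F₂))
      ((Set.univ : Set (Fin p → ℂ)) ×ˢ (polydisc n 1 ×ˢ (Set.univ : Set (Fin q → ℂ)))) :=
  stmt_5_general n p q 𝒮 h𝒮sep F₁ F₂
end

section
/- Let Ω₁, Ω₂, Ω₃ be domains in ℂ^{m₁}, ℂ^{m₂}, ℂ^{m₃} and S ⊆ Ω₁ × Ω₂ × Ω₃ relatively closed with empty interior. For a₃ ∈ Ω₃, let S(a₃) be the set of a₂ ∈ Ω₂ such that {z₁ : (z₁,a₂,a₃) ∈ S} has empty interior in ℂ^{m₁}, and let 𝒮 be the set of a₃ ∈ Ω₃ such that Ω₂ ∖ S(a₃) is of Baire category I. Then Ω₃ ∖ 𝒮 is of Baire category I in Ω₃. -/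
open Complex Metric MeasureTheory Filter Set Topology

/-!
Fix a countable basis of the first factor. For a basic open set `K`, the set of `b ∈ B` with
`K × {b} ⊆ S` is relatively closed in `B`, and it has empty interior, since otherwise `S` would
contain a nonempty open box. These sets cover the `b` whose fibre `{a | (a, b) ∈ S}` has interior
points; this is the case of two factors. For three factors, apply it to `S` seen in
`(Ω₁ × Ω₂) × Ω₃`, and, for each `a₃` whose fibre `{(z₁, z₂) | (z₁, z₂, a₃) ∈ S}` has empty interior,
to that fibre in `Ω₁ × Ω₂`.
-/

open Set TopologicalSpace

section

variable {V : Type*} [NormedAddCommGroup V]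

lemma BaireCatI.subset {s t D : Set V} (h : BaireCatI t D) (hst : s ⊆ t) : BaireCatI s D :=
  let ⟨F, hF, htF⟩ := h
  ⟨F, hF, hst.trans htF⟩

lemma BaireCatI.of_subset_iUnion {ι : Type*} [Countable ι] {s D : Set V} {F : ι → Set V}
    (hF : ∀ i, F i ⊆ D ∧ closure (F i) ∩ D ⊆ F i ∧ interior (F i) = ∅) (hs : s ⊆ ⋃ i, F i) :
    BaireCatI s D := by
  obtain ⟨f, hf⟩ := exists_surjective_nat (Option ι)
  refine ⟨fun n => (f n).elim ∅ F, fun n => ?_, fun x hx => ?_⟩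
  · dsimp only
    cases f n with
    | none => simp
    | some i => exact hF i
  · obtain ⟨i, hi⟩ := mem_iUnion.1 (hs hx)
    obtain ⟨n, hn⟩ := hf (some i)
    exact mem_iUnion.2 ⟨n, by simpa [hn] using hi⟩

end

section

variable {X Y : Type*} [TopologicalSpace X] [TopologicalSpace Y]

lemma closure_preimage_inter_subset {f : X → Y} (hf : Continuous f) {S W : Set Y} {W' : Set X}
    (hS : closure S ∩ W ⊆ S) (hW : MapsTo f W' W) : closure (f ⁻¹' S) ∩ W' ⊆ f ⁻¹' S :=
  fun _ hx => hS ⟨hf.closure_preimage_subset S hx.1, hW hx.2⟩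

lemma closure_setOf_forall_mem_inter_subset {S : Set (X × Y)} {A : Set X} {B : Set Y}
    (hS : S ⊆ A ×ˢ B) (hScl : closure S ∩ A ×ˢ B ⊆ S) (K : Set X) :
    closure {b ∈ B | ∀ a ∈ K, (a, b) ∈ S} ∩ B ⊆ {b ∈ B | ∀ a ∈ K, (a, b) ∈ S} := by
  rintro b ⟨hb, hbB⟩
  refine ⟨hbB, fun a ha => hScl ⟨?_, ?_, hbB⟩⟩
  · have hmaps : MapsTo (a, ·) {b ∈ B | ∀ a ∈ K, (a, b) ∈ S} S := fun _ hb' => hb'.2 a ha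
    exact hmaps.closure (by fun_prop) hb
  · obtain ⟨b', hb'⟩ := closure_nonempty_iff.1 ⟨b, hb⟩
    exact (hS (hb'.2 a ha)).1

lemma interior_setOf_forall_mem_eq_empty {S : Set (X × Y)} (hS : interior S = ∅) {K : Set X}
    (hK : (interior K).Nonempty) (B : Set Y) :
    interior {b ∈ B | ∀ a ∈ K, (a, b) ∈ S} = ∅ := by
  set T := {b ∈ B | ∀ a ∈ K, (a, b) ∈ S}
  have hbox : interior K ×ˢ interior T ⊆ interior S :=
    interior_maximal (fun p hp => (interior_subset hp.2).2 p.1 (interior_subset hp.1))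
      (isOpen_interior.prod isOpen_interior)
  rw [hS, subset_empty_iff, prod_eq_empty_iff] at hbox
  exact hbox.resolve_left hK.ne_empty

lemma exists_mem_countableBasis_subset [SecondCountableTopology X] {U : Set X} (hU : IsOpen U)
    (hne : U.Nonempty) : ∃ K ∈ countableBasis X, K ⊆ U :=
  let ⟨_, hx⟩ := hne
  let ⟨K, hK, _, hKU⟩ := (isBasis_countableBasis X).exists_subset_of_mem_open hx hU
  ⟨K, hK, hKU⟩

end

theorem baireCatI_diff_setOf_interior_fiber_eq_empty {X V : Type*} [TopologicalSpace X]
    [SecondCountableTopology X] [NormedAddCommGroup V]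
    {S : Set (X × V)} {A : Set X} {B : Set V}
    (hS : S ⊆ A ×ˢ B) (hScl : closure S ∩ A ×ˢ B ⊆ S) (hSint : interior S = ∅) :
    BaireCatI (B \ {b ∈ B | interior {a | (a, b) ∈ S} = ∅}) B := by
  have : Countable (countableBasis X) := (countable_countableBasis X).to_subtype
  refine BaireCatI.of_subset_iUnion
    (F := fun K : countableBasis X => {b ∈ B | ∀ a ∈ (K : Set X), (a, b) ∈ S})
    (fun K => ⟨fun b hb => hb.1, closure_setOf_forall_mem_inter_subset hS hScl K,
      interior_setOf_forall_mem_eq_empty hSint ?_ B⟩) ?_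
  · rw [(isOpen_of_mem_countableBasis K.2).interior_eq]
    exact nonempty_of_mem_countableBasis K.2
  · rintro b ⟨hb, hfiber⟩
    obtain ⟨K, hK, hKsub⟩ := exists_mem_countableBasis_subset isOpen_interior
      (nonempty_iff_ne_empty.2 fun h => hfiber ⟨hb, h⟩)
    exact mem_iUnion.2
      ⟨⟨K, hK⟩, hb, fun a ha => interior_subset (s := {a | (a, b) ∈ S}) (hKsub ha)⟩

theorem stmt_9_general {m₁ m₂ m₃ : ℕ}
    (Ω₁ : Set (Fin m₁ → ℂ)) (Ω₂ : Set (Fin m₂ → ℂ)) (Ω₃ : Set (Fin m₃ → ℂ))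
    (S : Set ((Fin m₁ → ℂ) × (Fin m₂ → ℂ) × (Fin m₃ → ℂ)))
    (hS : S ⊆ Ω₁ ×ˢ (Ω₂ ×ˢ Ω₃)) (hScl : closure S ∩ (Ω₁ ×ˢ (Ω₂ ×ˢ Ω₃)) ⊆ S)
    (hSint : interior S = ∅) :
    BaireCatI
      (Ω₃ \ {a₃ ∈ Ω₃ |
        BaireCatI (Ω₂ \ {a₂ ∈ Ω₂ | interior {z₁ | (z₁, a₂, a₃) ∈ S} = ∅}) Ω₂}) Ω₃ := by
  let e := Homeomorph.prodAssoc (Fin m₁ → ℂ) (Fin m₂ → ℂ) (Fin m₃ → ℂ)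
  have hcat₃ : BaireCatI (Ω₃ \ {a₃ ∈ Ω₃ | interior {z | (z, a₃) ∈ e ⁻¹' S} = ∅}) Ω₃ := by
    refine baireCatI_diff_setOf_interior_fiber_eq_empty (A := Ω₁ ×ˢ Ω₂) ?_ ?_ ?_
    · exact fun z hz => ⟨⟨(hS hz).1, (hS hz).2.1⟩, (hS hz).2.2⟩
    · exact closure_preimage_inter_subset e.continuous hScl
        fun z hz => ⟨hz.1.1, hz.1.2, hz.2⟩
    · rw [← e.preimage_interior, hSint, preimage_empty]
  refine hcat₃.subset fun a₃ ha₃ => ⟨ha₃.1, fun hfiber => ha₃.2 ⟨ha₃.1, ?_⟩⟩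
  refine baireCatI_diff_setOf_interior_fiber_eq_empty (A := Ω₁)
    (S := (fun z : (Fin m₁ → ℂ) × (Fin m₂ → ℂ) => (z.1, z.2, a₃)) ⁻¹' S) ?_ ?_ hfiber.2
  · exact fun z hz => ⟨(hS hz).1, (hS hz).2.1⟩
  · exact closure_preimage_inter_subset (by fun_prop) hScl fun z hz => ⟨hz.1, hz.2, ha₃.1⟩

/-- Lemma 4.1, case M = 3. -/
theorem stmt_9 {m₁ m₂ m₃ : ℕ}
    (Ω₁ : Set (Fin m₁ → ℂ)) (Ω₂ : Set (Fin m₂ → ℂ)) (Ω₃ : Set (Fin m₃ → ℂ))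
    (hΩ₁ : IsOpen Ω₁) (hΩ₁c : IsConnected Ω₁)
    (hΩ₂ : IsOpen Ω₂) (hΩ₂c : IsConnected Ω₂)
    (hΩ₃ : IsOpen Ω₃) (hΩ₃c : IsConnected Ω₃)
    (S : Set ((Fin m₁ → ℂ) × (Fin m₂ → ℂ) × (Fin m₃ → ℂ)))
    (hS : S ⊆ Ω₁ ×ˢ (Ω₂ ×ˢ Ω₃)) (hScl : closure S ∩ (Ω₁ ×ˢ (Ω₂ ×ˢ Ω₃)) ⊆ S)
    (hSint : interior S = ∅) :
    BaireCatI
      (Ω₃ \ {a₃ ∈ Ω₃ |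
        BaireCatI (Ω₂ \ {a₂ ∈ Ω₂ | interior {z₁ | (z₁, a₂, a₃) ∈ S} = ∅}) Ω₂}) Ω₃ :=
  stmt_9_general Ω₁ Ω₂ Ω₃ S hS hScl hSint
end

section
/- For every n ≥ 2 there exists an open dense subset 𝒜 of Eⁿ that is plurithin at 0 ∈ Eⁿ, and such that the complement Eⁿ ∖ 𝒜 contains no non-empty relatively open subset of a real hypersurface. -/
open Complex Metric MeasureTheory Filter Set Topology

noncomputable section
variable {V : Type*} [NormedAddCommGroup V] [NormedSpace ℂ V]

/-- `A` is plurithin at `a`. -/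
def Plurithin (A : Set V) (a : V) : Prop :=
  a ∉ closure A ∨
    (a ∈ closure A ∧ ∃ Ω : Set V, IsOpen Ω ∧ a ∈ Ω ∧ ∃ u : V → EReal, PSHOn u Ω ∧
      Filter.limsup u (nhdsWithin a (A \ {a})) < u a)

/-- `C` is a non-empty relatively open subset of a real (C¹, regular) hypersurface:
near each of its points, `C` coincides with a regular level set of a C¹ real function. -/
def IsHypersurfacePiece (C : Set V) : Prop :=
  C.Nonempty ∧ ∀ c ∈ C, ∃ (U : Set V) (ρ : V → ℝ),
    IsOpen U ∧ c ∈ U ∧ ContDiff ℝ 1 ρ ∧ (∀ z ∈ U, fderiv ℝ ρ z ≠ 0) ∧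
    C ∩ U = {z ∈ U | ρ z = 0}

end

/-!
Fix a sequence `a` in the punctured unit disc which is dense in the disc and put
`p = ∑ⱼ wⱼ log (2 / |· - aⱼ|)`, with weights `wⱼ > 0` so small that `p 0 < ∞`. By the formula for
the circle average of `log |· - a|`, each term, hence `p`, satisfies the super-mean value
inequality on the disc, so `u z = -∑ₖ p (z k)` is plurisubharmonic on `Eⁿ`. Take
`𝒜 = {z ∈ Eⁿ | u z < u 0 - 1}`: `u` witnesses that `𝒜` is plurithin at `0`, and `𝒜` is open and
contains every point having a coordinate among the poles `aⱼ`, so it is dense.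
If `{ρ = 0}` is a regular level set through `c`, then `dρ(c)` does not vanish on some vector `v`
along the `j`-th coordinate axis, and for `c'` near `c` the real line `c' + ℝ v` crosses
`{ρ = 0}` near `c` (intermediate value theorem). Moving a coordinate `k ≠ j` of `c` onto a nearby
pole, which needs `n ≥ 2`, produces a point of the hypersurface lying in `𝒜`.
-/

open scoped Real ENNReal

noncomputable section

lemma Function.Periodic.setLIntegral_Ioc_comp_add {G : ℝ → ℝ≥0∞} {T : ℝ} [Fact (0 < T)]
    (hG : G.Periodic T) (η : ℝ) :
    ∫⁻ θ in Ioc 0 T, G (θ + η) = ∫⁻ θ in Ioc 0 T, G θ := by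
  have hlift : ∀ t, ∫⁻ θ in Ioc t (t + T), G θ = ∫⁻ b : AddCircle T, hG.lift b := fun t ↦
    AddCircle.lintegral_preimage T t hG.lift
  have hshift : ∫⁻ θ in Ioc 0 T, G (θ + η) = ∫⁻ θ in Ioc η (η + T), G θ := by
    have := (measurePreserving_add_right volume η).setLIntegral_comp_preimage_emb
      (measurableEmbedding_addRight η) G (Ioc η (η + T))
    rwa [preimage_add_const_Ioc, sub_self, add_sub_cancel_left] at this
  rw [hshift, hlift, ← hlift 0, zero_add]

lemma add_circleMap_mul_eq (z β : ℂ) (r θ : ℝ) :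
    z + circleMap 0 r θ * β = circleMap z (r * ‖β‖) (θ + β.arg) := by
  conv_lhs => rw [← β.norm_mul_exp_arg_mul_I]
  simp only [circleMap, ofReal_mul, ofReal_add, add_mul, Complex.exp_add]
  ring

def SuperMeanOn (F : ℂ → ℝ≥0∞) (S : Set ℂ) : Prop :=
  ∀ c : ℂ, ∀ R : ℝ, (∀ θ, circleMap c R θ ∈ S) →
    ∫⁻ θ in Ioc 0 (2 * π), F (circleMap c R θ) ≤ ENNReal.ofReal (2 * π) * F c

namespace SuperMeanOn

variable {F : ℂ → ℝ≥0∞} {S T : Set ℂ}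

lemma mono (hF : SuperMeanOn F S) (hTS : T ⊆ S) : SuperMeanOn F T :=
  fun c R hc ↦ hF c R fun θ ↦ hTS (hc θ)

lemma const_mul (hF : SuperMeanOn F S) {w : ℝ≥0∞} (hw : w ≠ ⊤) :
    SuperMeanOn (fun z ↦ w * F z) S := fun c R hc ↦ by
  rw [lintegral_const_mul' _ _ hw, mul_left_comm]
  gcongr
  exact hF c R hc

lemma tsum {F : ℕ → ℂ → ℝ≥0∞} (hF : ∀ j, SuperMeanOn (F j) S) (hm : ∀ j, Measurable (F j)) :
    SuperMeanOn (fun z ↦ ∑' j, F j z) S := fun c R hc ↦ by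
  rw [lintegral_tsum (f := fun j θ ↦ F j (circleMap c R θ))
    fun j ↦ ((hm j).comp (continuous_circleMap c R).measurable).aemeasurable,
    ← ENNReal.tsum_mul_left]
  exact ENNReal.tsum_le_tsum fun j ↦ hF j c R hc

lemma lintegral_add_circleMap_mul_le (hF : SuperMeanOn F S) {z β : ℂ} {r : ℝ}
    (h : ∀ θ, z + circleMap 0 r θ * β ∈ S) :
    ∫⁻ θ in Ioc 0 (2 * π), F (z + circleMap 0 r θ * β) ≤ ENNReal.ofReal (2 * π) * F z := by
  have : Fact (0 < 2 * π) := ⟨Real.two_pi_pos⟩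
  simp_rw [add_circleMap_mul_eq]
  rw [Function.Periodic.setLIntegral_Ioc_comp_add (G := fun θ ↦ F (circleMap z (r * ‖β‖) θ))
    (fun θ ↦ by simp only [periodic_circleMap z _ θ]) β.arg]
  refine hF z _ fun θ ↦ ?_
  simpa [add_circleMap_mul_eq] using h (θ - β.arg)

end SuperMeanOn

lemma log_norm_sub_le_circleAverage {c a : ℂ} (hca : c ≠ a) (R : ℝ) :
    Real.log ‖c - a‖ ≤ Real.circleAverage (fun w ↦ Real.log ‖w - a‖) c R := by
  rcases eq_or_ne R 0 with rfl | hR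
  · simp
  rw [circleAverage_log_norm_sub_const_eq_log_radius_add_posLog hR]
  have hca' : ‖c - a‖ ≠ 0 := norm_ne_zero_iff.mpr (sub_ne_zero.mpr hca)
  calc Real.log ‖c - a‖ = Real.log R + Real.log (R⁻¹ * ‖c - a‖) := by
        rw [Real.log_mul (inv_ne_zero hR) hca', Real.log_inv]; ring
    _ ≤ Real.log R + log⁺ (R⁻¹ * ‖c - a‖) := by
        gcongr; rw [Real.posLog_apply]; exact le_max_right _ _

lemma lintegral_ofReal_circleMap {g : ℂ → ℝ} {c : ℂ} {R : ℝ} (hg : CircleIntegrable g c R)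
    (h0 : ∀ θ, 0 ≤ g (circleMap c R θ)) :
    ∫⁻ θ in Ioc 0 (2 * π), ENNReal.ofReal (g (circleMap c R θ)) =
      ENNReal.ofReal (2 * π * Real.circleAverage g c R) := by
  rw [← ofReal_integral_eq_lintegral_ofReal
    ((intervalIntegrable_iff_integrableOn_Ioc_of_le Real.two_pi_pos.le).mp hg)
    (Eventually.of_forall h0), Real.circleAverage_def, smul_eq_mul,
    intervalIntegral.integral_of_le Real.two_pi_pos.le, mul_inv_cancel_left₀ Real.two_pi_pos.ne']

/-- `log (2 / ‖w - a‖)`, with the value `⊤` at `a` set by hand since `Real.log 0 = 0`. -/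
def logPole (a w : ℂ) : ℝ≥0∞ :=
  if w = a then ⊤ else ENNReal.ofReal (Real.log 2 - Real.log ‖w - a‖)

lemma logPole_self (a : ℂ) : logPole a a = ⊤ := if_pos rfl

lemma logPole_of_ne {a w : ℂ} (h : w ≠ a) :
    logPole a w = ENNReal.ofReal (Real.log 2 - Real.log ‖w - a‖) := if_neg h

lemma continuous_logPole (a : ℂ) : Continuous (logPole a) := by
  refine continuous_iff_continuousAt.mpr fun w ↦ ?_
  rcases eq_or_ne w a with rfl | hw
  · rw [← continuousWithinAt_compl_self, ContinuousWithinAt, logPole_self]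
    have hlog : Tendsto (fun z ↦ Real.log 2 - Real.log ‖z - w‖) (𝓝[≠] w) atTop :=
      tendsto_atTop_add_const_left _ _ (tendsto_neg_atBot_atTop.comp
        (Real.tendsto_log_nhdsNE_zero.comp
          ((tendsto_norm_sub_self_nhdsNE w).mono_right (nhdsGT_le_nhdsNE 0))))
    refine (ENNReal.tendsto_ofReal_atTop.comp hlog).congr' ?_
    filter_upwards [self_mem_nhdsWithin] with z hz
    exact (logPole_of_ne hz).symm
  · have hcont : ContinuousAt (fun z ↦ ENNReal.ofReal (Real.log 2 - Real.log ‖z - a‖)) w :=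
      ENNReal.continuous_ofReal.continuousAt.comp (continuousAt_const.sub
        ((continuous_norm.comp (continuous_id.sub continuous_const)).continuousAt.log
          (norm_ne_zero_iff.mpr (sub_ne_zero.mpr hw))))
    refine hcont.congr ?_
    filter_upwards [isOpen_ne.mem_nhds hw] with z hz
    exact (logPole_of_ne hz).symm

lemma superMeanOn_logPole (a : ℂ) : SuperMeanOn (logPole a) (closedBall a 2) := by
  intro c R hc
  rcases eq_or_ne c a with rfl | hca
  · rw [logPole_self, ENNReal.mul_top (ENNReal.ofReal_pos.mpr Real.two_pi_pos).ne']
    exact le_top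
  set g : ℂ → ℝ := fun w ↦ Real.log 2 - Real.log ‖w - a‖
  have hg : CircleIntegrable g c R :=
    (circleIntegrable_const _ c R).sub (circleIntegrable_log_norm_sub_const R)
  have hg0 : ∀ θ, 0 ≤ g (circleMap c R θ) := fun θ ↦ by
    have hle : ‖circleMap c R θ - a‖ ≤ 2 := by simpa [dist_eq_norm] using hc θ
    rcases (norm_nonneg (circleMap c R θ - a)).eq_or_lt with h | h
    · simp [g, ← h, Real.log_nonneg one_le_two]
    · simpa [g] using Real.log_le_log h hle
  have hae : ∀ᵐ θ ∂volume, circleMap c R θ ≠ a := by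
    rcases eq_or_ne R 0 with rfl | hR
    · simpa using hca
    · exact measure_eq_zero_iff_ae_notMem.mp
        (((countable_singleton a).preimage_circleMap c hR).measure_zero _)
  calc ∫⁻ θ in Ioc 0 (2 * π), logPole a (circleMap c R θ)
      = ∫⁻ θ in Ioc 0 (2 * π), ENNReal.ofReal (g (circleMap c R θ)) :=
        lintegral_congr_ae (ae_restrict_of_ae (hae.mono fun θ h ↦ logPole_of_ne h))
    _ = ENNReal.ofReal (2 * π * Real.circleAverage g c R) := lintegral_ofReal_circleMap hg hg0
    _ ≤ ENNReal.ofReal (2 * π * g c) := by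
        gcongr
        rw [Real.circleAverage_fun_sub (circleIntegrable_const _ c R)
          (circleIntegrable_log_norm_sub_const R), Real.circleAverage_const]
        exact sub_le_sub_left (log_norm_sub_le_circleAverage hca R) _
    _ = ENNReal.ofReal (2 * π) * logPole a c := by
        rw [ENNReal.ofReal_mul Real.two_pi_pos.le, logPole_of_ne hca]

def poleWeight (a : ℂ) (j : ℕ) : ℝ≥0∞ := (2 ^ j * (1 + logPole a 0))⁻¹

lemma poleWeight_ne_top (a : ℂ) (j : ℕ) : poleWeight a j ≠ ⊤ :=
  ENNReal.inv_ne_top.mpr (mul_ne_zero (pow_ne_zero _ two_ne_zero) (by simp))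

lemma poleWeight_ne_zero {a : ℂ} (ha : a ≠ 0) (j : ℕ) : poleWeight a j ≠ 0 := by
  refine ENNReal.inv_ne_zero.mpr (ENNReal.mul_ne_top (by simp) ?_)
  simp [logPole_of_ne (Ne.symm ha)]

lemma poleWeight_mul_logPole_zero_le (a : ℂ) (j : ℕ) :
    poleWeight a j * logPole a 0 ≤ 2⁻¹ ^ j := by
  rw [poleWeight, ENNReal.mul_inv (by simp) (by simp), mul_assoc, ENNReal.inv_pow]
  calc 2⁻¹ ^ j * ((1 + logPole a 0)⁻¹ * logPole a 0)
      ≤ 2⁻¹ ^ j * ((1 + logPole a 0)⁻¹ * (1 + logPole a 0)) := by gcongr; exact le_add_self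
    _ ≤ 2⁻¹ ^ j := mul_le_of_le_one_right' (ENNReal.inv_mul_le_one _)

def potential (a : ℕ → ℂ) (w : ℂ) : ℝ≥0∞ := ∑' j, poleWeight (a j) j * logPole (a j) w

section Potential

variable {a : ℕ → ℂ}

lemma continuous_weighted_logPole (j : ℕ) :
    Continuous fun w ↦ poleWeight (a j) j * logPole (a j) w :=
  (ENNReal.continuous_const_mul (poleWeight_ne_top _ j)).comp (continuous_logPole _)

lemma lowerSemicontinuous_potential : LowerSemicontinuous (potential a) :=
  lowerSemicontinuous_tsum fun j ↦ (continuous_weighted_logPole j).lowerSemicontinuous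

lemma potential_zero_ne_top : potential a 0 ≠ ⊤ := by
  refine ne_top_of_le_ne_top ?_
    (ENNReal.tsum_le_tsum fun j ↦ poleWeight_mul_logPole_zero_le (a j) j)
  simp [ENNReal.tsum_geometric, ENNReal.one_sub_inv_two]

lemma potential_eq_top {j : ℕ} (ha : a j ≠ 0) : potential a (a j) = ⊤ := by
  refine top_le_iff.mp (le_trans ?_ (ENNReal.le_tsum j))
  rw [logPole_self, ENNReal.mul_top (poleWeight_ne_zero ha j)]

lemma superMeanOn_potential (ha : ∀ j, a j ∈ ball 0 1) :
    SuperMeanOn (potential a) (ball 0 1) := by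
  refine SuperMeanOn.tsum (fun j ↦ ?_) fun j ↦ (continuous_weighted_logPole j).measurable
  refine ((superMeanOn_logPole (a j)).mono ?_).const_mul (poleWeight_ne_top _ j)
  refine (ball_subset_ball' ?_).trans ball_subset_closedBall
  have := mem_ball_zero_iff.mp (ha j)
  rw [dist_zero_left]
  linarith

end Potential

section PlurisubharmonicPotential

variable {V : Type*} [NormedAddCommGroup V] [NormedSpace ℂ V]

lemma EReal.posPart_coe_ennreal (x : ℝ≥0∞) : EReal.posPart (x : EReal) = x := by
  rcases eq_or_ne x ⊤ with rfl | hx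
  · simp [EReal.posPart]
  · rw [EReal.posPart, if_neg (by simpa using hx), EReal.toReal_coe_ennreal,
      ENNReal.ofReal_toReal hx]

lemma EReal.posPart_neg_coe_ennreal (x : ℝ≥0∞) : EReal.posPart (-(x : EReal)) = 0 := by
  have hx : -(x : EReal) ≤ 0 := by rw [EReal.neg_le, neg_zero]; exact EReal.coe_ennreal_nonneg x
  rw [EReal.posPart, if_neg (fun h ↦ by simp [h] at hx), ENNReal.ofReal_eq_zero]
  exact EReal.toReal_nonpos hx

lemma erealCircleAvg_neg_coe (F : ℂ → ℝ≥0∞) (r : ℝ) :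
    erealCircleAvg (fun w ↦ -(F w : EReal)) 0 r =
      -(((∫⁻ θ in Ioc 0 (2 * π), F (circleMap 0 r θ) : ℝ≥0∞) : EReal) / ((2 * π : ℝ) : EReal)) := by
  simp only [erealCircleAvg, EReal.posPart_neg_coe_ennreal, neg_neg, EReal.posPart_coe_ennreal,
    lintegral_zero, EReal.coe_ennreal_zero, EReal.zero_div, zero_sub]

lemma pshOn_neg_coe {M : V → ℝ≥0∞} {Ω : Set V} (hM : LowerSemicontinuous M)
    (hmean : ∀ z ∈ Ω, ∀ b : V, ∀ r : ℝ, 0 < r → (∀ lam : ℂ, ‖lam‖ ≤ r → z + lam • b ∈ Ω) →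
      ∫⁻ θ in Ioc 0 (2 * π), M (z + circleMap 0 r θ • b) ≤ ENNReal.ofReal (2 * π) * M z) :
    PSHOn (fun z ↦ -(M z : EReal)) Ω := by
  refine ⟨(continuous_coe_ennreal_ereal.neg.comp_lowerSemicontinuous_antitone hM
    fun x y hxy ↦ ?_).upperSemicontinuousOn Ω, fun z hz b r hr hball ↦ ?_⟩
  · exact EReal.neg_le_neg_iff.mpr (EReal.coe_ennreal_le_coe_ennreal_iff.mpr hxy)
  rw [erealCircleAvg_neg_coe (fun lam ↦ M (z + lam • b)), EReal.neg_le_neg_iff,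
    EReal.div_le_iff_le_mul (EReal.coe_pos.mpr Real.two_pi_pos) (EReal.coe_ne_top _)]
  have h2π : ((2 * π : ℝ) : EReal) = (ENNReal.ofReal (2 * π) : EReal) := by
    rw [EReal.coe_ennreal_ofReal, max_eq_left Real.two_pi_pos.le]
  rw [h2π, ← EReal.coe_ennreal_mul, EReal.coe_ennreal_le_coe_ennreal_iff]
  exact hmean z hz b r hr hball

lemma plurithin_of_forall_le {A Ω : Set V} {a : V} (hΩ : IsOpen Ω) (ha : a ∈ Ω) {u : V → EReal}
    (hu : PSHOn u Ω) {m : EReal} (hm : m < u a) (hA : ∀ z ∈ A, u z ≤ m) : Plurithin A a := by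
  by_cases hcl : a ∈ closure A
  · refine Or.inr ⟨hcl, Ω, hΩ, ha, u, hu,
      lt_of_le_of_lt (limsup_le_of_le (by isBoundedDefault) ?_) hm⟩
    filter_upwards [self_mem_nhdsWithin] with z hz using hA z hz.1
  · exact Or.inl hcl

end PlurisubharmonicPotential

section Coordinates

variable {ι : Type*} [Fintype ι]

lemma polydisc_eq_ball (n : ℕ) {r : ℝ} (hr : 0 < r) : polydisc n r = ball 0 r := by
  ext z
  simp [polydisc, pi_norm_lt_iff hr]

lemma apply_mem_ball_zero {z : ι → ℂ} (hz : z ∈ ball 0 1) (k : ι) : z k ∈ ball 0 1 :=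
  mem_ball_zero_iff.mpr ((norm_le_pi_norm z k).trans_lt (mem_ball_zero_iff.mp hz))

def sumPotential (a : ℕ → ℂ) (z : ι → ℂ) : ℝ≥0∞ := ∑ k, potential a (z k)

variable {a : ℕ → ℂ}

lemma lowerSemicontinuous_sumPotential : LowerSemicontinuous (sumPotential (ι := ι) a) :=
  lowerSemicontinuous_sum fun k _ ↦ lowerSemicontinuous_potential.comp (continuous_apply k)

lemma sumPotential_zero_ne_top : sumPotential (ι := ι) a 0 ≠ ⊤ :=
  ENNReal.sum_ne_top.mpr fun _ _ ↦ potential_zero_ne_top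

lemma sumPotential_eq_top (ha : ∀ j, a j ≠ 0) {z : ι → ℂ} {k : ι} (hk : z k ∈ range a) :
    sumPotential a z = ⊤ := by
  obtain ⟨j, hj⟩ := hk
  refine top_le_iff.mp (le_trans ?_ (Finset.single_le_sum (f := fun k ↦ potential a (z k))
    (fun _ _ ↦ zero_le) (Finset.mem_univ k)))
  rw [← hj, potential_eq_top (ha j)]

lemma pshOn_neg_sumPotential (ha : ∀ j, a j ∈ ball 0 1) :
    PSHOn (fun z ↦ -(sumPotential a z : EReal)) (ball (0 : ι → ℂ) 1) := by
  refine pshOn_neg_coe lowerSemicontinuous_sumPotential fun z _ b r hr hball ↦ ?_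
  have hmeas : Measurable (potential a) := lowerSemicontinuous_potential.measurable
  simp only [sumPotential, Pi.add_apply, Pi.smul_apply, smul_eq_mul]
  rw [lintegral_finsetSum (f := fun k θ ↦ potential a (z k + circleMap 0 r θ * b k)) _
    fun k _ ↦ hmeas.comp (by fun_prop), Finset.mul_sum]
  refine Finset.sum_le_sum fun k _ ↦
    (superMeanOn_potential ha).lintegral_add_circleMap_mul_le fun θ ↦ ?_
  exact apply_mem_ball_zero (hball _ (by simp [abs_of_pos hr])) k

end Coordinates

section Line

variable {E : Type*} [NormedAddCommGroup E] [NormedSpace ℝ E] {ρ : E → ℝ} {c w : E}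

lemma exists_sign_change_on_line (hd : DifferentiableAt ℝ ρ c) (hc : ρ c = 0)
    (hpos : 0 < fderiv ℝ ρ c w) {r : ℝ} (hr : 0 < r) :
    ∃ ε > 0, ε * ‖w‖ < r ∧ ρ (c + (-ε) • w) < 0 ∧ 0 < ρ (c + ε • w) := by
  set g : ℝ → ℝ := fun t ↦ ρ (c + t • w)
  have hg : HasDerivAt g (fderiv ℝ ρ c w) 0 := by
    have hline : HasDerivAt (fun t : ℝ ↦ c + t • w) w 0 := by
      simpa using ((hasDerivAt_id (0 : ℝ)).smul_const w).const_add c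
    exact hd.hasFDerivAt.comp_hasDerivAt_of_eq (0 : ℝ) hline (by simp)
  have hsign := eventually_nhdsWithin_sign_eq_of_deriv_pos (f := g) (x₀ := 0)
    (by rwa [hg.deriv]) (by simpa [g] using hc)
  have hsmall : ∀ᶠ t in 𝓝 (0 : ℝ), t * ‖w‖ < r :=
    ((continuous_id.mul continuous_const).tendsto' (0 : ℝ) 0 (by simp)).eventually_lt_const hr
  obtain ⟨δ, hδ, hδP⟩ := Metric.eventually_nhds_iff.mp (hsign.and hsmall)
  have hε := half_pos hδ
  obtain ⟨hsign_right, hsmall_right⟩ := hδP (y := δ / 2)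
    (by rw [Real.dist_eq, sub_zero, abs_of_pos hε]; linarith)
  have hsign_left := (hδP (y := -(δ / 2))
    (by rw [Real.dist_eq, sub_zero, abs_neg, abs_of_pos hε]; linarith)).1
  refine ⟨δ / 2, hε, hsmall_right, ?_, ?_⟩
  · rwa [sub_zero, sign_neg (neg_neg_of_pos hε), sign_eq_neg_one_iff] at hsign_left
  · rwa [sub_zero, sign_pos hε, sign_eq_one_iff] at hsign_right

lemma eventually_exists_zero_on_line (hρ : Continuous ρ) (hd : DifferentiableAt ℝ ρ c)
    (hc : ρ c = 0) (hw : fderiv ℝ ρ c w ≠ 0) {U : Set E} (hU : U ∈ 𝓝 c) :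
    ∀ᶠ c' in 𝓝 c, ∃ t : ℝ, c' + t • w ∈ U ∧ ρ (c' + t • w) = 0 := by
  wlog hpos : 0 < fderiv ℝ ρ c w generalizing w
  · have hneg : 0 < fderiv ℝ ρ c (-w) := by
      rw [map_neg, neg_pos]; exact lt_of_le_of_ne (not_lt.mp hpos) hw
    refine (this hneg.ne' hneg).mono fun c' ⟨t, ht⟩ ↦ ⟨-t, ?_⟩
    simpa only [neg_smul, smul_neg] using ht
  obtain ⟨r, hr, hrU⟩ := Metric.mem_nhds_iff.mp hU
  obtain ⟨ε, hε, hεw, hleft, hright⟩ := exists_sign_change_on_line hd hc hpos (half_pos hr)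
  have hcont : ∀ t : ℝ, Continuous fun c' ↦ ρ (c' + t • w) := fun t ↦ by fun_prop
  filter_upwards [((hcont _).tendsto c).eventually_const_lt hright,
    ((hcont _).tendsto c).eventually_lt_const hleft, ball_mem_nhds c (half_pos hr)]
    with c' hc'r hc'l hc'c
  obtain ⟨t, ht, ht0⟩ := intermediate_value_Icc (neg_le_self hε.le)
    (by fun_prop : Continuous fun t : ℝ ↦ ρ (c' + t • w)).continuousOn ⟨hc'l.le, hc'r.le⟩
  refine ⟨t, hrU ?_, ht0⟩
  have htw : ‖t • w‖ ≤ ε * ‖w‖ := by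
    rw [norm_smul, Real.norm_eq_abs]; gcongr; exact abs_le.mpr ht
  rw [mem_ball] at hc'c ⊢
  calc dist (c' + t • w) c ≤ dist c' c + ‖t • w‖ := by
        rw [dist_eq_norm, dist_eq_norm, add_sub_right_comm]; exact norm_add_le _ _
    _ < r := by linarith

end Line

section Update

variable {ι X : Type*} [DecidableEq ι] [TopologicalSpace X]

lemma exists_update_mem_of_mem_closure {c : ι → X} {k : ι} {P : Set X} (hP : c k ∈ closure P)
    {W : Set (ι → X)} (hW : W ∈ 𝓝 c) : ∃ p ∈ P, Function.update c k p ∈ W := by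
  have hcont : Continuous (Function.update c k) := continuous_const.update k continuous_id
  have ht : Tendsto (Function.update c k) (𝓝 (c k)) (𝓝 c) := by
    simpa using hcont.tendsto (c k)
  exact ((mem_closure_iff_frequently.mp hP).and_eventually (ht hW)).exists

lemma subset_closure_setOf_exists_apply_mem [Nonempty ι] {U : Set (ι → X)} (hU : IsOpen U)
    {P : Set X} (hP : ∀ z ∈ U, ∀ k, z k ∈ closure P) :
    U ⊆ closure {z ∈ U | ∃ k, z k ∈ P} := by
  intro z hz
  let k : ι := Classical.arbitrary ι
  refine mem_closure_iff_nhds.mpr fun W hW ↦ ?_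
  obtain ⟨p, hp, hpW, hpU⟩ :=
    exists_update_mem_of_mem_closure (hP z hz k) (inter_mem hW (hU.mem_nhds hz))
  exact ⟨_, hpW, hpU, k, by simpa using hp⟩

end Update

lemma IsHypersurfacePiece.exists_apply_mem {ι : Type*} [Fintype ι] [Nontrivial ι]
    {C : Set (ι → ℂ)} (hC : IsHypersurfacePiece C) {P : Set ℂ}
    (hP : ∀ z ∈ C, ∀ k, z k ∈ closure P) : ∃ z ∈ C, ∃ k, z k ∈ P := by
  classical
  obtain ⟨⟨c, hc⟩, hloc⟩ := hC
  obtain ⟨U, ρ, hU, hcU, hρ, hreg, hCU⟩ := hloc c hc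
  have hρc : ρ c = 0 := (hCU.subset ⟨hc, hcU⟩).2
  obtain ⟨j, v, hjv⟩ : ∃ j v, fderiv ℝ ρ c (Pi.single j v) ≠ 0 := by
    by_contra! h
    refine hreg c hcU (ContinuousLinearMap.ext fun y ↦ ?_)
    rw [← Finset.univ_sum_single y, map_sum]
    simp [h]
  obtain ⟨k, hkj⟩ := exists_ne j
  obtain ⟨p, hp, t, htU, ht⟩ := exists_update_mem_of_mem_closure (hP c hc k)
    (eventually_exists_zero_on_line hρ.continuous (hρ.differentiable one_ne_zero _) hρc hjv
      (hU.mem_nhds hcU))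
  refine ⟨_, (hCU.symm.subset ⟨htU, ht⟩).1, k, ?_⟩
  simpa [Pi.single_eq_of_ne hkj] using hp

lemma exists_seq_punctured_ball_dense :
    ∃ a : ℕ → ℂ, (∀ j, a j ∈ ball 0 1 \ {0}) ∧ ball 0 1 ⊆ closure (range a) := by
  obtain ⟨T, hTP, hTc, hPT⟩ := (TopologicalSpace.IsSeparable.of_separableSpace
    (ball (0 : ℂ) 1 \ {0})).exists_countable_dense_subset
  have hball : ball (0 : ℂ) 1 ⊆ closure T :=
    ((dense_compl_singleton 0).open_subset_closure_inter isOpen_ball).trans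
      ((closure_mono hPT).trans_eq closure_closure)
  obtain ⟨a, rfl⟩ := hTc.exists_eq_range
    (closure_nonempty_iff.mp ⟨0, hball (mem_ball_self one_pos)⟩)
  exact ⟨a, fun j ↦ hTP (mem_range_self j), hball⟩

end

/-- Proposition A: for `n ≥ 2` there is an open dense subset `𝒜` of `Eⁿ`
which is plurithin at `0` and whose complement `Eⁿ ∖ 𝒜` contains no non-empty relatively
open subset of a real hypersurface. -/
theorem stmt_14 (n : ℕ) (hn : 2 ≤ n) :
    ∃ 𝒜 : Set (Fin n → ℂ), IsOpen 𝒜 ∧ 𝒜 ⊆ polydisc n 1 ∧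
      polydisc n 1 ⊆ closure 𝒜 ∧ Plurithin 𝒜 0 ∧
      ¬ ∃ C : Set (Fin n → ℂ), IsHypersurfacePiece C ∧ C ⊆ polydisc n 1 \ 𝒜 := by
  have : Nontrivial (Fin n) := Fin.nontrivial_iff_two_le.mpr hn
  obtain ⟨a, ha, hdense⟩ := exists_seq_punctured_ball_dense
  set M : (Fin n → ℂ) → ℝ≥0∞ := sumPotential a
  have hM0 : M 0 ≠ ⊤ := sumPotential_zero_ne_top
  have hpole : ∀ z : Fin n → ℂ, ∀ k, z k ∈ range a → M 0 + 1 < M z := fun z k hk ↦ by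
    rw [show M z = ⊤ from sumPotential_eq_top (fun j ↦ (ha j).2) hk]
    exact ENNReal.add_lt_top.mpr ⟨hM0.lt_top, ENNReal.one_lt_top⟩
  have hcoord : ∀ z ∈ ball (0 : Fin n → ℂ) 1, ∀ k, z k ∈ closure (range a) :=
    fun z hz k ↦ hdense (apply_mem_ball_zero hz k)
  rw [polydisc_eq_ball n one_pos]
  refine ⟨ball 0 1 ∩ {z | M 0 + 1 < M z},
    isOpen_ball.inter (lowerSemicontinuous_sumPotential.isOpen_preimage _), inter_subset_left,
    ?_, ?_, ?_⟩
  · exact (subset_closure_setOf_exists_apply_mem isOpen_ball hcoord).trans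
      (closure_mono fun z ⟨hz, k, hk⟩ ↦ ⟨hz, hpole z k hk⟩)
  · refine plurithin_of_forall_le isOpen_ball (mem_ball_self one_pos)
      (pshOn_neg_sumPotential fun j ↦ (ha j).1) (m := -((M 0 + 1 : ℝ≥0∞) : EReal)) ?_
      fun z hz ↦ EReal.neg_le_neg_iff.mpr (EReal.coe_ennreal_le_coe_ennreal_iff.mpr hz.2.le)
    exact EReal.neg_lt_neg_iff.mpr
      (EReal.coe_ennreal_lt_coe_ennreal_iff.mpr (ENNReal.lt_add_right hM0 one_ne_zero))
  · rintro ⟨C, hC, hCsub⟩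
    obtain ⟨z, hz, k, hk⟩ := hC.exists_apply_mem fun z hz ↦ hcoord z (hCsub hz).1
    exact (hCsub hz).2 ⟨(hCsub hz).1, hpole z k hk⟩
end
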